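/- The regularised value of the positive geometric tail plus the negative geometric tail plus the middle finite sum vanishes: for every integer n, (constant term at y=0 of e^{(2·max(0,n)-n)y}/(1-e^{2y})) + (constant term at y=0 of e^{(-2·max(0,n)-n)y}/(1-e^{-2y})) + (value at y=0 of ∑_{k=-max(0,n)+1}^{max(0,n)-1} e^{(2k-n)y}) = 0. -/

import Mathlib

open Filter Topology

/-!
The constant Laurent coefficient of `e^{ay}/(1 - e^{cy})` at `0` is `1/2 - a/c`, by expanding the
exponentials to second order. For `c = ±2` and `a = ±2m - n` with `m = max 0 n`, the two tails
therefore contribute `(1 - 2m + n)/2 + (1 - 2m - n)/2 = 1 - 2m`, while the middle oriented sum counts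
`2m - 1` terms (with sign), each equal to `1` at `y = 0`.
-/

/-- Oriented finite sum `∑_{k=a}^{b} f k`, interpreted with the usual orientation
convention when `a > b` (so that `∑_{k=1}^{-1} f k = - f 0`), as used in the paper for
the "middle" compensating sum when `max(0,n) = 0`. -/
noncomputable def orientedSum (a b : ℤ) (f : ℤ → ℂ) : ℂ :=
  (∑ k ∈ Finset.Icc a b, f k) - ∑ k ∈ Finset.Icc (b + 1) (a - 1), f k

theorem orientedSum_const (a b : ℤ) (x : ℂ) :
    orientedSum a b (fun _ => x) = ((b + 1 - a : ℤ) : ℂ) * x := by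
  have hcard : ((Finset.Icc a b).card : ℤ) - (Finset.Icc (b + 1) (a - 1)).card = b + 1 - a := by
    rw [Int.card_Icc, Int.card_Icc, show a - 1 + 1 - (b + 1) = -(b + 1 - a) by ring,
      Int.toNat_sub_toNat_neg]
  simp only [orientedSum, Finset.sum_const, nsmul_eq_mul, ← sub_mul]
  exact_mod_cast congrArg (fun z : ℤ => (z : ℂ) * x) hcard

namespace Complex

theorem tendsto_exp_mul_sub_one_div (a : ℂ) :
    Tendsto (fun y => (exp (a * y) - 1) / y) (𝓝[≠] 0) (𝓝 a) := by
  have h : HasDerivAt (fun y => exp (a * y)) a 0 := by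
    simpa using ((hasDerivAt_id (0 : ℂ)).const_mul a).cexp
  refine (hasDerivAt_iff_tendsto_slope.1 h).congr fun y => ?_
  simp [slope_def_field]

theorem tendsto_exp_sub_one_sub_div_sq :
    Tendsto (fun z => (exp z - 1 - z) / z ^ 2) (𝓝[≠] 0) (𝓝 (1 / 2)) := by
  have h := ((exp_sub_sum_range_succ_isLittleO_pow 2).tendsto_div_nhds_zero.mono_left
    (nhdsWithin_le_nhds (s := {0}ᶜ))).add_const (1 / 2 : ℂ)
  rw [zero_add] at h
  refine h.congr' ?_
  filter_upwards [self_mem_nhdsWithin] with z (hz : z ≠ 0)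
  simp only [Finset.sum_range_succ, Finset.sum_range_zero, Nat.factorial]
  field_simp
  ring

theorem tendsto_inv_one_sub_exp_add_inv :
    Tendsto (fun z => 1 / (1 - exp z) + 1 / z) (𝓝[≠] 0) (𝓝 (1 / 2)) := by
  have hlin : Tendsto (fun z => (exp z - 1) / z) (𝓝[≠] 0) (𝓝 1) := by
    simpa using tendsto_exp_mul_sub_one_div 1
  -- `1/(1 - e^z) + 1/z = ((e^z - 1 - z)/z^2) / ((e^z - 1)/z)` once `e^z ≠ 1`.
  have h := tendsto_exp_sub_one_sub_div_sq.div hlin one_ne_zero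
  rw [div_one] at h
  refine h.congr' ?_
  filter_upwards [self_mem_nhdsWithin, hlin.eventually_ne one_ne_zero] with z (hz : z ≠ 0) hne
  have hexp : exp z - 1 ≠ 0 := (div_ne_zero_iff.1 hne).1
  have hexp' : 1 - exp z ≠ 0 := sub_ne_zero.2 (sub_ne_zero.1 hexp).symm
  simp only [Pi.div_apply]
  field_simp
  ring

theorem tendsto_exp_mul_div_one_sub_exp_mul_add_inv (a : ℂ) {c : ℂ} (hc : c ≠ 0) :
    Tendsto (fun y => exp (a * y) / (1 - exp (c * y)) + 1 / (c * y)) (𝓝[≠] 0)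
      (𝓝 (1 / 2 - a / c)) := by
  have hscale : Tendsto (c * ·) (𝓝[≠] 0) (𝓝[≠] 0) := by
    have h := (Homeomorph.mulLeft₀ c hc).map_punctured_nhds_eq 0
    simp only [Homeomorph.coe_mulLeft₀, mul_zero] at h
    exact h.le
  have hdenom : Tendsto (fun y => (1 - exp (c * y)) / y) (𝓝[≠] 0) (𝓝 (-c)) :=
    (tendsto_exp_mul_sub_one_div c).neg.congr fun y => by ring
  -- `e^{ay}/(1 - e^{cy}) = (e^{ay} - 1)/(1 - e^{cy}) + 1/(1 - e^{cy})`, and only the second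
  -- summand needs a second-order expansion.
  have hfirst := (tendsto_exp_mul_sub_one_div a).div hdenom (neg_ne_zero.2 hc)
  have h := hfirst.add (tendsto_inv_one_sub_exp_add_inv.comp hscale)
  rw [div_neg, neg_add_eq_sub] at h
  refine h.congr' ?_
  filter_upwards [self_mem_nhdsWithin] with y (hy : y ≠ 0)
  simp only [Pi.div_apply, Function.comp_apply, div_div_div_cancel_right₀ hy]
  rw [← add_assoc, ← add_div, sub_add_cancel]

end Complex

/-- For every integer `n`, the constant Laurent coefficient at `y = 0` of the positive tail
`e^{(2·max(0,n)-n)y}/(1-e^{2y})`, plus the constant Laurent coefficient at `y = 0` of the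
negative tail `e^{(-2·max(0,n)-n)y}/(1-e^{-2y})`, plus the value at `y = 0` of the middle
finite sum `∑_{k=-max(0,n)+1}^{max(0,n)-1} e^{(2k-n)y}`, vanishes. -/
theorem regularised_tails_plus_middle_vanish (n : ℤ) :
    ∃ r₁ r₂ L₁ L₂ : ℂ,
      Tendsto (fun y : ℂ =>
          Complex.exp (((2 * max 0 n - n : ℤ) : ℂ) * y) / (1 - Complex.exp (2 * y)) - r₁ / y)
        (𝓝[≠] 0) (𝓝 L₁) ∧
      Tendsto (fun y : ℂ =>
          Complex.exp (((-2 * max 0 n - n : ℤ) : ℂ) * y) / (1 - Complex.exp (-2 * y)) - r₂ / y)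
        (𝓝[≠] 0) (𝓝 L₂) ∧
      L₁ + L₂ +
        orientedSum (-(max 0 n) + 1) (max 0 n - 1)
          (fun k => Complex.exp (((2 * k - n : ℤ) : ℂ) * 0)) = 0 := by
  refine ⟨-(1 / 2), 1 / 2, 1 / 2 - ((2 * max 0 n - n : ℤ) : ℂ) / 2,
    1 / 2 - ((-2 * max 0 n - n : ℤ) : ℂ) / (-2), ?_, ?_, ?_⟩
  · exact (Complex.tendsto_exp_mul_div_one_sub_exp_mul_add_inv _ two_ne_zero).congr
      fun y => by ring
  · exact (Complex.tendsto_exp_mul_div_one_sub_exp_mul_add_inv _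
      (neg_ne_zero.2 two_ne_zero)).congr fun y => by ring
  · simp only [mul_zero, Complex.exp_zero, orientedSum_const]
    push_cast
    ring
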